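/- Let P be a strong Feller Markov kernel on a Polish space X and suppose there exists n ≥ 1 such that P^n(x,A) > 0 for every x ∈ X and every nonempty open set A ⊂ X. Then P has at most one invariant probability measure and, if an invariant probability measure μ exists, it is equivalent (mutually absolutely continuous) to P^{n+1}(x,·) for every x ∈ X. -/

import Mathlib

open MeasureTheory ProbabilityTheory Filter
open scoped ENNReal

/-- A Markov kernel is *strong Feller* if it maps bounded measurable functions to
continuous functions. -/
def StrongFeller {X : Type*} [MeasurableSpace X] [TopologicalSpace X] (P : Kernel X X) : Prop :=
  ∀ f : X → ℝ, Measurable f → (∃ C, ∀ x, |f x| ≤ C) →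
    Continuous fun x => ∫ y, f y ∂(P x)

/-- A measure `μ` is invariant for the kernel `P` if `∫ P(x,·) μ(dx) = μ`. -/
def Invariant {X : Type*} [MeasurableSpace X] (P : Kernel X X) (μ : Measure X) : Prop :=
  μ.bind (fun x => P x) = μ

/-- `n`-step transition kernel: the `n`-fold composition of `P` with itself. -/
noncomputable def kpow {α : Type*} [MeasurableSpace α] (P : Kernel α α) : ℕ → Kernel α α
  | 0 => Kernel.id
  | n + 1 => P ∘ₖ kpow P n

/-!
Strong Feller makes `y ↦ P(y, A)` continuous, so it vanishes identically as soon as it vanishes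
almost everywhere for a measure charging every nonempty open set. Irreducibility says that
`P^n(x, ·)` is such a measure, and so is every nonzero invariant `μ = μ P^n`. Hence `μ = μ P` and
`P^{n+1}(x, ·) = P^n(x, ·) P` both have as null sets exactly the `A` with `P(·, A) ≡ 0`.
For uniqueness, the parts `μ - ν` and `ν - μ` of the difference of two invariant measures are
mutually singular and again invariant; by the above they cannot both be nonzero, and equal masses
force both to vanish.
-/

open Set

namespace MeasureTheory.Measure

lemma sub_add_eq_sub_add {X : Type*} [MeasurableSpace X] (μ ν : Measure X)
    [IsFiniteMeasure μ] [IsFiniteMeasure ν] : μ - ν + ν = ν - μ + μ := by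
  have h := sub_toSignedMeasure_eq_toSignedMeasure_sub (μ := μ) (ν := ν)
  rw [sub_eq_sub_iff_add_eq_add] at h
  rw [← toSignedMeasure_eq_toSignedMeasure_iff, toSignedMeasure_add, toSignedMeasure_add,
    add_comm _ (toSignedMeasure μ), h]

end MeasureTheory.Measure

section InvariantMeasure

variable {X : Type*} [MeasurableSpace X] {P : Kernel X X}

lemma kpow_succ_apply (m : ℕ) (x : X) :
    kpow P (m + 1) x = (kpow P m x).bind fun y => P y :=
  Kernel.comp_apply P (kpow P m) x

lemma invariant_kpow {μ : Measure X} (hμ : Invariant P μ) : ∀ m, Invariant (kpow P m) μ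
  | 0 => Measure.bind_dirac
  | m + 1 => Kernel.Invariant.comp hμ (invariant_kpow hμ m)

-- The hypotheses say `γ - δ = μ - ν = γ P - δ P` without subtracting measures.
lemma invariant_of_mutuallySingular_of_add_eq [IsMarkovKernel P] {γ δ μ ν : Measure X}
    [IsFiniteMeasure γ] [IsFiniteMeasure ν] (hγδ : γ ⟂ₘ δ) (h : γ + ν = δ + μ)
    (hbind : γ.bind (fun x => P x) + ν = δ.bind (fun x => P x) + μ) : Invariant P γ := by
  obtain ⟨s, hs, hγs, hδs⟩ := hγδ
  have hle_off : ∀ A ⊆ sᶜ, γ A ≤ γ.bind (fun x => P x) A := by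
    intro A hA
    have hδA : δ A = 0 := measure_mono_null hA hδs
    refine ENNReal.le_of_add_le_add_right (measure_ne_top ν A) ?_
    calc γ A + ν A = μ A := by simpa [hδA] using congrArg (fun m : Measure X => m A) h
      _ ≤ δ.bind (fun x => P x) A + μ A := le_add_self
      _ = γ.bind (fun x => P x) A + ν A := by
        simpa using (congrArg (fun m : Measure X => m A) hbind).symm
  have hle : γ ≤ γ.bind (fun x => P x) := Measure.le_iff.2 fun A _ =>
    calc γ A = γ (A ∩ sᶜ) := (measure_inter_conull (by rwa [compl_compl])).symm
      _ ≤ γ.bind (fun x => P x) (A ∩ sᶜ) := hle_off _ inter_subset_right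
      _ ≤ γ.bind (fun x => P x) A := measure_mono inter_subset_left
  exact (Measure.eq_of_le_of_measure_univ_eq hle (Measure.comp_apply_univ).symm).symm

section StrongFeller

variable [TopologicalSpace X]

lemma StrongFeller.continuous_measureReal (hP : StrongFeller P) {A : Set X}
    (hA : MeasurableSet A) : Continuous fun x => (P x).real A := by
  have hbdd : ∃ C, ∀ x, |A.indicator (1 : X → ℝ) x| ≤ C :=
    ⟨1, fun x => by by_cases hx : x ∈ A <;> simp [hx]⟩
  simpa only [integral_indicator_one hA] using hP _ (measurable_one.indicator hA) hbdd

lemma StrongFeller.apply_eq_zero_of_ae (hP : StrongFeller P) [IsFiniteKernel P]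
    {ρ : Measure X} [ρ.IsOpenPosMeasure] {A : Set X} (hA : MeasurableSet A)
    (h : ∀ᵐ y ∂ρ, P y A = 0) (y : X) : P y A = 0 := by
  have hae : (fun y => (P y).real A) =ᵐ[ρ] 0 := h.mono fun y hy => by simp [measureReal_def, hy]
  have heq := ((hP.continuous_measureReal hA).ae_eq_iff_eq ρ continuous_const).1 hae
  exact (measureReal_eq_zero_iff (measure_ne_top _ _)).1 (congrFun heq y)

lemma StrongFeller.bind_absolutelyContinuous (hP : StrongFeller P) [IsFiniteKernel P]
    (ρ : Measure X) {σ : Measure X} [σ.IsOpenPosMeasure] :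
    ρ.bind (fun x => P x) ≪ σ.bind (fun x => P x) := by
  refine Measure.AbsolutelyContinuous.mk fun A hA hσA => ?_
  rw [Measure.bind_apply hA P.aemeasurable] at hσA ⊢
  have hzero := hP.apply_eq_zero_of_ae hA ((lintegral_eq_zero_iff (P.measurable_coe hA)).1 hσA)
  simp [hzero]

end StrongFeller

section Irreducible

variable [TopologicalSpace X] [OpensMeasurableSpace X] {n : ℕ}

lemma Invariant.isOpenPosMeasure (hirr : ∀ x, (kpow P n x).IsOpenPosMeasure) {μ : Measure X}
    (hμ : Invariant P μ) (hμ0 : μ ≠ 0) : μ.IsOpenPosMeasure := by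
  refine ⟨fun U hU hne hμU => hμ0 ?_⟩
  rw [← invariant_kpow hμ n, Measure.bind_apply hU.measurableSet (kpow P n).aemeasurable,
    lintegral_eq_zero_iff (Kernel.measurable_coe _ hU.measurableSet)] at hμU
  rw [← ae_eq_bot, ← eventually_false_iff_eq_bot]
  filter_upwards [hμU] with x hx using hU.measure_ne_zero (kpow P n x) hne hx

variable (hP : StrongFeller P) (hirr : ∀ x, (kpow P n x).IsOpenPosMeasure)
include hP hirr

lemma Invariant.absolutelyContinuous [IsFiniteKernel P] {μ ν : Measure X} (hμ : Invariant P μ)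
    (hν : Invariant P ν) (hν0 : ν ≠ 0) : μ ≪ ν := by
  have := hν.isOpenPosMeasure hirr hν0
  have h := hP.bind_absolutelyContinuous μ (σ := ν)
  rwa [hμ, hν] at h

lemma Invariant.eq_of_measure_univ_eq [IsMarkovKernel P] {μ ν : Measure X} [IsFiniteMeasure μ]
    [IsFiniteMeasure ν] (hμ : Invariant P μ) (hν : Invariant P ν) (hmass : μ univ = ν univ) :
    μ = ν := by
  have hsing : (μ - ν) ⟂ₘ (ν - μ) := Measure.mutually_singular_measure_sub
  have hsum : μ - ν + ν = ν - μ + μ := Measure.sub_add_eq_sub_add μ ν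
  have hsum_bind : (μ - ν).bind (fun x => P x) + ν = (ν - μ).bind (fun x => P x) + μ := by
    have h := congrArg (fun m => m.bind fun x => P x) hsum
    rwa [Measure.comp_add, Measure.comp_add, hμ, hν] at h
  have hinv₁ := invariant_of_mutuallySingular_of_add_eq hsing hsum hsum_bind
  have hinv₂ := invariant_of_mutuallySingular_of_add_eq hsing.symm hsum.symm hsum_bind.symm
  have hzero : μ - ν = 0 ∨ ν - μ = 0 := by
    by_contra! h
    exact h.1 (Measure.eq_zero_of_absolutelyContinuous_of_mutuallySingular
      (hinv₁.absolutelyContinuous hP hirr hinv₂ h.2) hsing)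
  have hmass_sub : (μ - ν) univ = (ν - μ) univ := by
    have := congrArg (fun m : Measure X => m univ) hsum
    simp only [Measure.add_apply, hmass] at this
    exact (ENNReal.add_left_inj (measure_ne_top ν univ)).1 this
  obtain ⟨h₁, h₂⟩ : μ - ν = 0 ∧ ν - μ = 0 := by
    rw [← Measure.measure_univ_eq_zero, ← Measure.measure_univ_eq_zero, hmass_sub, and_self]
    rwa [← Measure.measure_univ_eq_zero, ← Measure.measure_univ_eq_zero, hmass_sub, or_self]
      at hzero
  simpa [h₁, h₂] using hsum.symm

end Irreducible

end InvariantMeasure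

theorem unique_invariant_of_strongFeller_irreducible_general
    {X : Type*} [TopologicalSpace X] [MeasurableSpace X] [BorelSpace X]
    (P : Kernel X X) [IsMarkovKernel P] (hP : StrongFeller P)
    (n : ℕ)
    (hirr : ∀ x : X, ∀ A : Set X, IsOpen A → A.Nonempty → 0 < kpow P n x A) :
    (∀ μ ν : Measure X, IsProbabilityMeasure μ → IsProbabilityMeasure ν →
      Invariant P μ → Invariant P ν → μ = ν) ∧
    (∀ μ : Measure X, IsProbabilityMeasure μ → Invariant P μ →
      ∀ x : X, μ ≪ kpow P (n + 1) x ∧ kpow P (n + 1) x ≪ μ) := by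
  have hpos (x : X) : (kpow P n x).IsOpenPosMeasure := ⟨fun U hU hne => (hirr x U hU hne).ne'⟩
  refine ⟨fun μ ν _ _ hμ hν => hμ.eq_of_measure_univ_eq hP hpos hν (by simp), fun μ _ hμ x => ?_⟩
  have := hμ.isOpenPosMeasure hpos (IsProbabilityMeasure.ne_zero μ)
  rw [kpow_succ_apply, ← hμ]
  exact ⟨hP.bind_absolutelyContinuous μ, hP.bind_absolutelyContinuous _⟩

/-- Let `P` be a strong Feller Markov kernel on a Polish space `X` such that for some `n ≥ 1`
one has `P^n(x,A) > 0` for every `x` and every nonempty open set `A`. Then `P` has at most one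
invariant probability measure and, if an invariant probability measure exists, it is
equivalent (mutually absolutely continuous) to `P^{n+1}(x,·)` for every `x ∈ X`. -/
theorem unique_invariant_of_strongFeller_irreducible
    {X : Type*} [TopologicalSpace X] [PolishSpace X] [MeasurableSpace X] [BorelSpace X]
    (P : Kernel X X) [IsMarkovKernel P] (hP : StrongFeller P)
    (n : ℕ) (hn : 1 ≤ n)
    (hirr : ∀ x : X, ∀ A : Set X, IsOpen A → A.Nonempty → 0 < kpow P n x A) :
    (∀ μ ν : Measure X, IsProbabilityMeasure μ → IsProbabilityMeasure ν →
      Invariant P μ → Invariant P ν → μ = ν) ∧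
    (∀ μ : Measure X, IsProbabilityMeasure μ → Invariant P μ →
      ∀ x : X, μ ≪ kpow P (n + 1) x ∧ kpow P (n + 1) x ≪ μ) :=
  unique_invariant_of_strongFeller_irreducible_general P hP n hirr
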